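/- arXiv:2311.08289 — 5 statements merged into one kernel-verified Lean document; each statement's English description precedes it below -/
import Mathlib

section
/- For every τ > 0 and x ∈ ℝ, the function v is differentiable in τ and twice differentiable in x at (τ,x), and it satisfies the reduced Black–Scholes heat-type equation ∂_τ v(τ,x) = (1/2)(∂²_x v(τ,x) − ∂_x v(τ,x)). -/
open MeasureTheory

/-- Standard normal cumulative distribution function. -/
noncomputable def stdN (y : ℝ) : ℝ :=
  ∫ u in Set.Iio y, Real.exp (-u ^ 2 / 2) / Real.sqrt (2 * Real.pi)

/-- Unit-volatility Black–Scholes price in reduced variables. -/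
noncomputable def bsv (τ x : ℝ) : ℝ :=
  Real.exp x * stdN (x / Real.sqrt τ + Real.sqrt τ / 2) -
    stdN (x / Real.sqrt τ - Real.sqrt τ / 2)

/-!
Write `d = x/√τ - √τ/2`, so that `v = eˣ N(d + √τ) - N(d)`. The Gaussian identity
`eˣ n(d + √τ) = n(d)` makes every term in which `N` is differentiated through `d` cancel:
`∂ₓv = eˣ N(d + √τ) = v + N(d)`, hence `∂ₓ²v - ∂ₓv = n(d)/√τ`, while `∂_τ v = n(d) · ∂_τ√τ = n(d)/(2√τ)`.
-/

open Real

noncomputable def stdNormalDensity (u : ℝ) : ℝ := exp (-u ^ 2 / 2) / √(2 * π)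

lemma continuous_stdNormalDensity : Continuous stdNormalDensity := by
  unfold stdNormalDensity
  fun_prop

lemma integrable_stdNormalDensity : Integrable stdNormalDensity := by
  refine ((integrable_exp_neg_mul_sq (b := 1 / 2) (by norm_num)).div_const √(2 * π)).congr
    (.of_forall fun u => ?_)
  simp only [stdNormalDensity]
  ring_nf

lemma stdN_eq_integral_Iic (y : ℝ) : stdN y = ∫ u in Set.Iic y, stdNormalDensity u :=
  integral_Iic_eq_integral_Iio.symm

lemma hasDerivAt_stdN (y : ℝ) : HasDerivAt stdN (stdNormalDensity y) y := by
  have hsplit : stdN = fun z => stdN 0 + ∫ u in (0 : ℝ)..z, stdNormalDensity u := by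
    funext z
    rw [stdN_eq_integral_Iic, stdN_eq_integral_Iic, ← intervalIntegral.integral_Iic_sub_Iic
      integrable_stdNormalDensity.integrableOn integrable_stdNormalDensity.integrableOn]
    ring
  exact hsplit ▸ (intervalIntegral.integral_hasDerivAt_right integrable_stdNormalDensity.intervalIntegrable
    (continuous_stdNormalDensity.stronglyMeasurableAtFilter _ _)
    continuous_stdNormalDensity.continuousAt).const_add _

lemma HasDerivAt.stdN {f : ℝ → ℝ} {f' t : ℝ} (hf : HasDerivAt f f' t) :
    HasDerivAt (fun t => stdN (f t)) (stdNormalDensity (f t) * f') t :=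
  (hasDerivAt_stdN (f t)).comp t hf

lemma exp_mul_stdNormalDensity_add (d s : ℝ) :
    exp (d * s + s ^ 2 / 2) * stdNormalDensity (d + s) = stdNormalDensity d := by
  simp only [stdNormalDensity, mul_div_assoc', ← exp_add]
  ring_nf

noncomputable def dMinus (τ x : ℝ) : ℝ := x / √τ - √τ / 2

lemma bsv_eq (τ x : ℝ) : bsv τ x = exp x * stdN (dMinus τ x + √τ) - stdN (dMinus τ x) := by
  rw [bsv, dMinus]
  ring_nf

lemma exp_mul_stdNormalDensity_dMinus_add_sqrt {τ : ℝ} (hτ : 0 < τ) (x : ℝ) :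
    exp x * stdNormalDensity (dMinus τ x + √τ) = stdNormalDensity (dMinus τ x) := by
  have hx : dMinus τ x * √τ + √τ ^ 2 / 2 = x := by
    have : √τ ≠ 0 := (sqrt_pos.2 hτ).ne'
    rw [dMinus]
    field_simp
    ring
  rw [← exp_mul_stdNormalDensity_add (dMinus τ x) √τ, hx]

lemma hasDerivAt_dMinus_x (τ x : ℝ) : HasDerivAt (fun y => dMinus τ y) (√τ)⁻¹ x := by
  simpa [dMinus, div_eq_mul_inv] using ((hasDerivAt_id x).mul_const (√τ)⁻¹).sub_const (√τ / 2)

lemma differentiableAt_dMinus_τ {τ : ℝ} (hτ : 0 < τ) (x : ℝ) :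
    DifferentiableAt ℝ (fun t => dMinus t x) τ := by
  have := hτ.ne'
  have := (sqrt_pos.2 hτ).ne'
  unfold dMinus
  fun_prop (disch := assumption)

lemma hasDerivAt_bsv_x {τ : ℝ} (hτ : 0 < τ) (x : ℝ) :
    HasDerivAt (fun y => bsv τ y) (exp x * stdN (dMinus τ x + √τ)) x := by
  simp only [bsv_eq]
  have hd := hasDerivAt_dMinus_x τ x
  refine (((hasDerivAt_exp x).mul (hd.add_const √τ).stdN).sub hd.stdN).congr_deriv ?_
  rw [← mul_assoc, exp_mul_stdNormalDensity_dMinus_add_sqrt hτ]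
  ring

lemma deriv_bsv_x {τ : ℝ} (hτ : 0 < τ) :
    deriv (fun y => bsv τ y) = fun y => bsv τ y + stdN (dMinus τ y) := by
  funext y
  rw [(hasDerivAt_bsv_x hτ y).deriv, bsv_eq]
  ring

lemma hasDerivAt_deriv_bsv_x {τ : ℝ} (hτ : 0 < τ) (x : ℝ) :
    HasDerivAt (deriv fun y => bsv τ y)
      (exp x * stdN (dMinus τ x + √τ) + stdNormalDensity (dMinus τ x) * (√τ)⁻¹) x := by
  rw [deriv_bsv_x hτ]
  exact (hasDerivAt_bsv_x hτ x).add (hasDerivAt_dMinus_x τ x).stdN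

lemma hasDerivAt_bsv_τ {τ : ℝ} (hτ : 0 < τ) (x : ℝ) :
    HasDerivAt (fun t => bsv t x) (stdNormalDensity (dMinus τ x) * (1 / (2 * √τ))) τ := by
  simp only [bsv_eq]
  have hd := (differentiableAt_dMinus_τ hτ x).hasDerivAt
  have hs := hasDerivAt_sqrt hτ.ne'
  refine (((hd.add hs).stdN.const_mul (exp x)).sub hd.stdN).congr_deriv ?_
  rw [Pi.add_apply, ← mul_assoc, exp_mul_stdNormalDensity_dMinus_add_sqrt hτ]
  ring

/-- For every `τ > 0` and `x ∈ ℝ`, `v` is differentiable in `τ` and twice differentiable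
in `x` at `(τ, x)`, and satisfies `∂_τ v = (1/2) (∂²_x v − ∂_x v)`. -/
theorem bsv_satisfies_reduced_heat_equation (τ x : ℝ) (hτ : 0 < τ) :
    ∃ vτ vx vxx : ℝ,
      HasDerivAt (fun t => bsv t x) vτ τ ∧
      HasDerivAt (fun y => bsv τ y) vx x ∧
      HasDerivAt (fun y => deriv (fun z => bsv τ z) y) vxx x ∧
      vτ = (1 / 2) * (vxx - vx) :=
  ⟨_, _, _, hasDerivAt_bsv_τ hτ x, hasDerivAt_bsv_x hτ x, hasDerivAt_deriv_bsv_x hτ x, by ring⟩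
end

section
/- For every x ∈ ℝ, the limit of v(τ,x) as τ → 0⁺ exists and equals (e^x − 1)⁺ = max(e^x − 1, 0); that is, v attains the Call payoff as initial condition. -/
open MeasureTheory

/-- Standard normal density. -/
noncomputable def stdn (y : ℝ) : ℝ :=
  Real.exp (-y ^ 2 / 2) / Real.sqrt (2 * Real.pi)

/-! With `s = √τ`, the two arguments of `N` are `x / s ± s / 2`. As `s → 0⁺` both tend to `+∞`,
`-∞` or `0` according to the sign of `x`, so both `N`-terms tend to the same limit `L = 1`, `0`
or `N 0`, and `v(τ, x) → (eˣ - 1) L`, which is the payoff in each case. The limits of `N` at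
`±∞` come from identifying it with the cdf of `gaussianReal 0 1`. -/

open Filter Topology Set Real ProbabilityTheory

lemma stdn_eq_gaussianPDFReal : stdn = gaussianPDFReal 0 1 := by
  ext u
  simp [stdn, gaussianPDFReal, div_eq_inv_mul]

lemma stdN_eq_setIntegral_Iic (y : ℝ) : stdN y = ∫ u in Iic y, gaussianPDFReal 0 1 u := by
  rw [stdN, ← setIntegral_congr_set Iio_ae_eq_Iic]
  exact congrArg _ stdn_eq_gaussianPDFReal

lemma stdN_eq_cdf_gaussianReal : stdN = cdf (gaussianReal 0 1) := by
  ext y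
  have hnonneg : 0 ≤ ∫ u in Iic y, gaussianPDFReal 0 1 u :=
    setIntegral_nonneg measurableSet_Iic fun u _ => gaussianPDFReal_nonneg 0 1 u
  rw [cdf_eq_real, measureReal_def, gaussianReal_apply_eq_integral _ one_ne_zero,
    ENNReal.toReal_ofReal hnonneg, stdN_eq_setIntegral_Iic]

lemma MeasureTheory.Integrable.continuous_integral_Iic {f : ℝ → ℝ} (hf : Integrable f) :
    Continuous fun y => ∫ u in Iic y, f u := by
  have h (y : ℝ) : ∫ u in Iic y, f u = (∫ u in Iic 0, f u) + ∫ u in 0..y, f u := by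
    rw [← intervalIntegral.integral_Iic_sub_Iic hf.integrableOn hf.integrableOn]
    ring
  rw [funext h]
  exact continuous_const.add (hf.continuous_primitive 0)

lemma continuous_stdN : Continuous stdN := by
  rw [funext stdN_eq_setIntegral_Iic]
  exact (integrable_gaussianPDFReal 0 1).continuous_integral_Iic

lemma tendsto_sqrt_nhdsGT_zero : Tendsto sqrt (𝓝[>] 0) (𝓝[>] 0) :=
  tendsto_nhdsWithin_of_tendsto_nhds_of_eventually_within _
    ((continuous_sqrt.tendsto' 0 0 sqrt_zero).mono_left nhdsWithin_le_nhds)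
    (eventually_nhdsWithin_of_forall fun _ => sqrt_pos.2)

section

variable {x : ℝ} {g : ℝ → ℝ}

lemma tendsto_div_add_atTop (hx : 0 < x) (hg : Tendsto g (𝓝[>] 0) (𝓝 0)) :
    Tendsto (fun s => x / s + g s) (𝓝[>] 0) atTop := by
  simpa only [div_eq_mul_inv] using (tendsto_inv_nhdsGT_zero.const_mul_atTop hx).atTop_add hg

lemma tendsto_div_add_atBot (hx : x < 0) (hg : Tendsto g (𝓝[>] 0) (𝓝 0)) :
    Tendsto (fun s => x / s + g s) (𝓝[>] 0) atBot := by
  simpa only [div_eq_mul_inv] using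
    (tendsto_inv_nhdsGT_zero.const_mul_atTop_of_neg hx).atBot_add hg

lemma tendsto_stdN_div_add_of_pos (hx : 0 < x) (hg : Tendsto g (𝓝[>] 0) (𝓝 0)) :
    Tendsto (fun s => stdN (x / s + g s)) (𝓝[>] 0) (𝓝 1) := by
  rw [stdN_eq_cdf_gaussianReal]
  exact (tendsto_cdf_atTop _).comp (tendsto_div_add_atTop hx hg)

lemma tendsto_stdN_div_add_of_neg (hx : x < 0) (hg : Tendsto g (𝓝[>] 0) (𝓝 0)) :
    Tendsto (fun s => stdN (x / s + g s)) (𝓝[>] 0) (𝓝 0) := by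
  rw [stdN_eq_cdf_gaussianReal]
  exact (tendsto_cdf_atBot _).comp (tendsto_div_add_atBot hx hg)

lemma tendsto_stdN_zero_div_add (hg : Tendsto g (𝓝[>] 0) (𝓝 0)) :
    Tendsto (fun s => stdN (0 / s + g s)) (𝓝[>] 0) (𝓝 (stdN 0)) :=
  (continuous_stdN.tendsto 0).comp (by simpa using hg)

end

/-- As `τ → 0⁺`, `v(τ, x)` tends to the Call payoff `(e^x − 1)⁺`. -/
theorem bsv_tendsto_call_payoff (x : ℝ) :
    Filter.Tendsto (fun τ => bsv τ x) (nhdsWithin 0 (Set.Ioi 0))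
      (nhds (max (Real.exp x - 1) 0)) := by
  have hhalf : Tendsto (fun s : ℝ => s / 2) (𝓝[>] 0) (𝓝 0) := by
    simpa using ((continuous_id.div_const (2 : ℝ)).tendsto 0).mono_left nhdsWithin_le_nhds
  have hneg_half : Tendsto (fun s : ℝ => -(s / 2)) (𝓝[>] 0) (𝓝 0) := by
    simpa using hhalf.neg
  have hv : (fun τ => bsv τ x) =
      (fun s => exp x * stdN (x / s + s / 2) - stdN (x / s + -(s / 2))) ∘ sqrt := by
    ext τ
    simp [bsv, sub_eq_add_neg]
  rw [hv]
  refine Tendsto.comp ?_ tendsto_sqrt_nhdsGT_zero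
  rcases lt_trichotomy x 0 with hx | rfl | hx
  · rw [max_eq_right (by linarith [exp_lt_one_iff.2 hx])]
    simpa using (tendsto_const_nhds.mul (tendsto_stdN_div_add_of_neg hx hhalf)).sub
      (tendsto_stdN_div_add_of_neg hx hneg_half)
  · simpa using (tendsto_stdN_zero_div_add hhalf).sub (tendsto_stdN_zero_div_add hneg_half)
  · rw [max_eq_left (by linarith [one_lt_exp_iff.2 hx])]
    simpa using (tendsto_const_nhds.mul (tendsto_stdN_div_add_of_pos hx hhalf)).sub
      (tendsto_stdN_div_add_of_pos hx hneg_half)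
end

section
/- Let d, m ∈ ℕ, t ≥ 0, C > 0 and H ∈ (0,1) with H ≠ 1/2. Let k : ℝ → ℝ^{d×m} (matrices with the Frobenius norm ‖·‖) be differentiable at every s > t with ‖k'(s)‖ ≤ C (s−t)^{H−3/2}, and for δ > 0 define the truncated kernel k^δ(s) := k(max(s, t+δ)). Then for every T̆ ≥ t and every δ ∈ (0, T̆ − t], the truncation error satisfies ∫_t^{T̆} ‖k^δ(s) − k(s)‖² ds ≤ (C/|H − 1/2|)² · (1 + 1/(2H)) · δ^{2H}; in particular ∫_t^{T̆} ‖k^δ(s) − k(s)‖² ds → 0 as δ → 0⁺. -/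
/-!
On `[t + δ, T]` the truncated kernel agrees with `k`, so only `(t, t + δ]` contributes. There
`k` is controlled by the mean value inequality against the primitive `C (s - t)^q / q` of the
derivative bound, `q = H - 1/2`, which gives
`‖k (t + δ) - k s‖² ≤ (C/|q|)² ((s - t)^{2q} + δ^{2q})`; the exponent `2q = 2H - 1 > -1` makes the
right-hand side integrable, with integral `(C/|q|)² (δ^{2H}/(2H) + δ^{2H})`.
-/

open Set Filter Topology MeasureTheory intervalIntegral

theorem integral_sub_rpow {p : ℝ} (hp : -1 < p) (t δ : ℝ) :
    ∫ s in t..t + δ, (s - t) ^ p = δ ^ (p + 1) / (p + 1) := by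
  rw [integral_comp_sub_right (fun x => x ^ p), sub_self, add_sub_cancel_left,
    integral_rpow (Or.inl hp), Real.zero_rpow (by linarith), sub_zero]

theorem tendsto_zero_of_nonneg_of_le_rpow {F : ℝ → ℝ} {c p : ℝ} (hp : 0 < p)
    (hF₀ : ∀ᶠ δ in 𝓝[>] 0, 0 ≤ F δ) (hF : ∀ᶠ δ in 𝓝[>] 0, F δ ≤ c * δ ^ p) :
    Tendsto F (𝓝[>] 0) (𝓝 0) := by
  have hpow : Tendsto (fun δ : ℝ => c * δ ^ p) (𝓝[>] 0) (𝓝 0) := by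
    simpa [Real.zero_rpow hp.ne'] using
      ((Real.continuousAt_rpow_const 0 p (Or.inr hp.le)).tendsto.const_mul c).mono_left
        nhdsWithin_le_nhds
  exact squeeze_zero' hF₀ hF hpow

section

variable {E : Type*} [NormedAddCommGroup E] [NormedSpace ℝ E]

theorem norm_sub_le_sub_of_norm_hasDerivAt_le {f f' : ℝ → E} {B B' : ℝ → ℝ} {a b : ℝ}
    (hab : a ≤ b) (hf : ∀ x ∈ Icc a b, HasDerivAt f (f' x) x)
    (hB : ∀ x ∈ Icc a b, HasDerivAt B (B' x) x) (bound : ∀ x ∈ Ico a b, ‖f' x‖ ≤ B' x) :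
    ‖f b - f a‖ ≤ B b - B a :=
  image_norm_le_of_norm_deriv_right_le_deriv_boundary' (f := fun x => f x - f a)
    (B := fun x => B x - B a)
    (fun x hx => ((hf x hx).sub_const _).continuousAt.continuousWithinAt)
    (fun x hx => ((hf x (Ico_subset_Icc_self hx)).sub_const _).hasDerivWithinAt)
    (by simp)
    (fun x hx => ((hB x hx).sub_const _).continuousAt.continuousWithinAt)
    (fun x hx => ((hB x (Ico_subset_Icc_self hx)).sub_const _).hasDerivWithinAt)
    bound (right_mem_Icc.2 hab)

theorem hasDerivAt_rpow_sub_div {t q x : ℝ} (hq : q ≠ 0) (hx : t < x) :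
    HasDerivAt (fun u => (u - t) ^ q / q) ((x - t) ^ (q - 1)) x := by
  refine ((((hasDerivAt_id' x).sub_const t).rpow_const
    (p := q) (Or.inl (sub_pos.2 hx).ne')).div_const q).congr_deriv ?_
  field_simp

variable {k k' : ℝ → E} {t C q : ℝ}

theorem norm_sub_le_of_norm_deriv_le_rpow (hq : q ≠ 0)
    (hderiv : ∀ s, t < s → HasDerivAt k (k' s) s)
    (hbound : ∀ s, t < s → ‖k' s‖ ≤ C * (s - t) ^ (q - 1)) {s r : ℝ} (hs : t < s)
    (hsr : s ≤ r) :
    ‖k r - k s‖ ≤ C / q * ((r - t) ^ q - (s - t) ^ q) := by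
  have h := norm_sub_le_sub_of_norm_hasDerivAt_le (B := fun u => C * ((u - t) ^ q / q)) hsr
    (fun x hx => hderiv x (hs.trans_le hx.1))
    (fun x hx => (hasDerivAt_rpow_sub_div hq (hs.trans_le hx.1)).const_mul C)
    (fun x hx => hbound x (hs.trans_le hx.1))
  convert h using 1
  ring

theorem sq_norm_sub_le_of_norm_deriv_le_rpow (hq : q ≠ 0)
    (hderiv : ∀ s, t < s → HasDerivAt k (k' s) s)
    (hbound : ∀ s, t < s → ‖k' s‖ ≤ C * (s - t) ^ (q - 1)) {s r : ℝ} (hs : t < s)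
    (hsr : s ≤ r) :
    ‖k r - k s‖ ^ 2 ≤ (C / |q|) ^ 2 * ((s - t) ^ (2 * q) + (r - t) ^ (2 * q)) := by
  have hrpow_two : ∀ x, t ≤ x → (x - t) ^ (2 * q) = ((x - t) ^ q) ^ 2 := fun x hx => by
    rw [mul_comm, Real.rpow_mul (sub_nonneg.2 hx), Real.rpow_two]
  have ha : 0 ≤ (r - t) ^ q := Real.rpow_nonneg (by linarith) _
  have hb : 0 ≤ (s - t) ^ q := Real.rpow_nonneg (sub_nonneg.2 hs.le) _
  calc ‖k r - k s‖ ^ 2 ≤ (C / q * ((r - t) ^ q - (s - t) ^ q)) ^ 2 :=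
        pow_le_pow_left₀ (norm_nonneg _)
          (norm_sub_le_of_norm_deriv_le_rpow hq hderiv hbound hs hsr) 2
    _ = (C / |q|) ^ 2 * ((r - t) ^ q - (s - t) ^ q) ^ 2 := by
        rw [mul_pow, div_pow, div_pow, sq_abs]
    _ ≤ (C / |q|) ^ 2 * ((s - t) ^ (2 * q) + (r - t) ^ (2 * q)) := by
        rw [hrpow_two s hs.le, hrpow_two r (by linarith)]
        gcongr
        nlinarith [mul_nonneg ha hb]

theorem integral_sq_norm_truncation_le (hq : q ≠ 0) (hq' : -1 / 2 < q)
    (hderiv : ∀ s, t < s → HasDerivAt k (k' s) s)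
    (hbound : ∀ s, t < s → ‖k' s‖ ≤ C * (s - t) ^ (q - 1)) {δ T : ℝ} (hδ : 0 < δ)
    (hδT : t + δ ≤ T) :
    ∫ s in t..T, ‖k (max s (t + δ)) - k s‖ ^ 2 ≤
      (C / |q|) ^ 2 * (δ ^ (2 * q + 1) / (2 * q + 1) + δ ^ (2 * q + 1)) := by
  set f : ℝ → ℝ := fun s => ‖k (max s (t + δ)) - k s‖ ^ 2
  set g : ℝ → ℝ := fun s => (C / |q|) ^ 2 * ((s - t) ^ (2 * q) + δ ^ (2 * q))
  have htδ : t < t + δ := by linarith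
  have hk : ContinuousOn k (Ioi t) := fun s hs => (hderiv s hs).continuousAt.continuousWithinAt
  have hf_cont : ContinuousOn f (Ioi t) := by
    have hmax : MapsTo (fun s => max s (t + δ)) (Ioi t) (Ioi t) :=
      fun s _ => htδ.trans_le (le_max_right s (t + δ))
    exact (((hk.comp (by fun_prop) hmax).sub hk).norm).pow 2
  have hf_le : ∀ s ∈ Ioc t (t + δ), f s ≤ g s := fun s hs => by
    simpa [f, g, max_eq_right hs.2] using
      sq_norm_sub_le_of_norm_deriv_le_rpow hq hderiv hbound hs.1 hs.2
  have hf_zero : EqOn f 0 (uIcc (t + δ) T) := fun s hs => by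
    rw [uIcc_of_le hδT] at hs
    simp [f, max_eq_left hs.1]
  have hrpow_int : IntervalIntegrable (fun s => (s - t) ^ (2 * q)) volume t (t + δ) := by
    have h2q : -1 < 2 * q := by linarith
    simpa [add_comm] using (intervalIntegrable_rpow' (a := 0) (b := δ) h2q).comp_sub_right t
  have hg_int : IntervalIntegrable g volume t (t + δ) :=
    (hrpow_int.add intervalIntegrable_const).const_mul _
  have hf_int : IntervalIntegrable f volume t (t + δ) := by
    refine (intervalIntegrable_iff_integrableOn_Ioc_of_le htδ.le).2 (hg_int.1.mono' ?_ ?_)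
    · exact (hf_cont.mono fun s hs => hs.1).aestronglyMeasurable measurableSet_Ioc
    · refine (ae_restrict_iff' measurableSet_Ioc).2 (ae_of_all _ fun s hs => ?_)
      rw [Real.norm_of_nonneg (by positivity)]
      exact hf_le s hs
  have hf_int' : IntervalIntegrable f volume (t + δ) T :=
    (hf_cont.mono fun s hs => htδ.trans_le (uIcc_of_le hδT ▸ hs).1).intervalIntegrable
  calc ∫ s in t..T, f s = (∫ s in t..t + δ, f s) + ∫ s in t + δ..T, f s :=
        (integral_add_adjacent_intervals hf_int hf_int').symm
    _ = ∫ s in t..t + δ, f s := by rw [integral_congr hf_zero]; simp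
    _ ≤ ∫ s in t..t + δ, g s := integral_mono_on_of_le_Ioo htδ.le hf_int hg_int
        fun s hs => hf_le s (Ioo_subset_Ioc_self hs)
    _ = (C / |q|) ^ 2 * (δ ^ (2 * q + 1) / (2 * q + 1) + δ ^ (2 * q + 1)) := by
        rw [intervalIntegral.integral_const_mul, integral_add hrpow_int intervalIntegrable_const,
          integral_sub_rpow (by linarith), intervalIntegral.integral_const, add_sub_cancel_left,
          smul_eq_mul, Real.rpow_add_one hδ.ne']
        ring

end

theorem kernel_truncation_error_general (d m : ℕ) (t C H : ℝ)
    (hH0 : 0 < H) (hH : H ≠ 1 / 2)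
    (k k' : ℝ → EuclideanSpace ℝ (Fin d × Fin m))
    (hderiv : ∀ s, t < s → HasDerivAt k (k' s) s)
    (hbound : ∀ s, t < s → ‖k' s‖ ≤ C * (s - t) ^ (H - 3 / 2))
    (T : ℝ) (hT : t ≤ T) :
    (∀ δ : ℝ, 0 < δ → δ ≤ T - t →
      ∫ s in t..T, ‖k (max s (t + δ)) - k s‖ ^ 2 ≤
        (C / |H - 1 / 2|) ^ 2 * (1 + 1 / (2 * H)) * δ ^ (2 * H)) ∧
    Filter.Tendsto (fun δ : ℝ => ∫ s in t..T, ‖k (max s (t + δ)) - k s‖ ^ 2)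
      (nhdsWithin 0 (Set.Ioi 0)) (nhds 0) := by
  have hbound' : ∀ s, t < s → ‖k' s‖ ≤ C * (s - t) ^ (H - 1 / 2 - 1) := fun s hs => by
    convert hbound s hs using 3
    ring
  have hestimate : ∀ δ : ℝ, 0 < δ → δ ≤ T - t →
      ∫ s in t..T, ‖k (max s (t + δ)) - k s‖ ^ 2 ≤
        (C / |H - 1 / 2|) ^ 2 * (1 + 1 / (2 * H)) * δ ^ (2 * H) := fun δ hδ hδT => by
    have h := integral_sq_norm_truncation_le (T := T) (sub_ne_zero.2 hH) (by linarith) hderiv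
      hbound' hδ (by linarith)
    rw [show 2 * (H - 1 / 2) + 1 = 2 * H by ring] at h
    convert h using 1
    ring
  refine ⟨hestimate, ?_⟩
  rcases hT.eq_or_lt with rfl | hTt
  · simp
  refine tendsto_zero_of_nonneg_of_le_rpow (c := (C / |H - 1 / 2|) ^ 2 * (1 + 1 / (2 * H)))
    (by positivity : 0 < 2 * H)
    (Eventually.of_forall fun δ => integral_nonneg hT fun _ _ => by positivity) ?_
  filter_upwards [self_mem_nhdsWithin,
    eventually_nhdsWithin_of_eventually_nhds (eventually_lt_nhds (sub_pos.2 hTt))]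
    with δ hδ hδT
  exact hestimate δ hδ hδT.le

/-- Truncation error for a Volterra kernel: if `‖k'(s)‖ ≤ C (s−t)^{H−3/2}` for `s > t` and
`k^δ(s) := k(s ∨ (t+δ))`, then for `0 < δ ≤ T̆ − t`,
`∫_t^{T̆} ‖k^δ(s) − k(s)‖² ds ≤ (C/|H−1/2|)² (1 + 1/(2H)) δ^{2H}`, and in particular the
truncation error tends to `0` as `δ → 0⁺`. -/
theorem kernel_truncation_error (d m : ℕ) (t C H : ℝ) (ht : 0 ≤ t) (hC : 0 < C)
    (hH0 : 0 < H) (hH1 : H < 1) (hH : H ≠ 1 / 2)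
    (k k' : ℝ → EuclideanSpace ℝ (Fin d × Fin m))
    (hderiv : ∀ s, t < s → HasDerivAt k (k' s) s)
    (hbound : ∀ s, t < s → ‖k' s‖ ≤ C * (s - t) ^ (H - 3 / 2))
    (T : ℝ) (hT : t ≤ T) :
    (∀ δ : ℝ, 0 < δ → δ ≤ T - t →
      ∫ s in t..T, ‖k (max s (t + δ)) - k s‖ ^ 2 ≤
        (C / |H - 1 / 2|) ^ 2 * (1 + 1 / (2 * H)) * δ ^ (2 * H)) ∧
    Filter.Tendsto (fun δ : ℝ => ∫ s in t..T, ‖k (max s (t + δ)) - k s‖ ^ 2)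
      (nhdsWithin 0 (Set.Ioi 0)) (nhds 0) :=
  kernel_truncation_error_general d m t C H hH0 hH k k' hderiv hbound T hT
end

section
/- Let σ ≥ 0, p ≥ 1, κ ≥ 0, C > 0 and θ, θ̄ ∈ ℝ, and let h : ℝ → ℝ be continuously differentiable with |h'(x)| ≤ C (1 + e^{κ x}) for all x ∈ ℝ. Let μ be the Gaussian measure on ℝ with mean 0 and variance σ². Then ∫ |h(θ̄ + x) − h(θ + x)|^p dμ(x) ≤ |θ̄ − θ|^p · 3^{p−1} C^p · (1 + (e^{p κ θ} + e^{p κ θ̄}) e^{p² κ² σ²/2}). -/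
/-!
By the mean value theorem, `|h(θ̄ + x) - h(θ + x)|` is at most `|θ̄ - θ|` times the supremum of
`|h'|` between `θ + x` and `θ̄ + x`; since `s ↦ e^{κ s}` is convex, that supremum is at most
`C (1 + e^{κ(θ + x)} + e^{κ(θ̄ + x)})`. Raising to the power `p` and using the power-mean
inequality `(a + b + c)^p ≤ 3^{p-1} (a^p + b^p + c^p)` bounds the integrand by an affine function
of `e^{p κ x}`, whose Gaussian integral is the moment generating function `e^{p² κ² σ² / 2}`.
-/

open MeasureTheory ProbabilityTheory Real Set

lemma exp_mul_le_exp_mul_add_exp_mul_of_mem_uIcc {κ a b s : ℝ} (hs : s ∈ uIcc a b) :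
    exp (κ * s) ≤ exp (κ * a) + exp (κ * b) := by
  have hconv : ConvexOn ℝ univ fun s => exp (κ * s) :=
    convexOn_exp.comp_linearMap (LinearMap.mul ℝ ℝ κ)
  calc exp (κ * s) ≤ max (exp (κ * a)) (exp (κ * b)) :=
        hconv.le_max_of_mem_segment (mem_univ a) (mem_univ b) (by rwa [segment_eq_uIcc])
    _ ≤ exp (κ * a) + exp (κ * b) := max_le_add_of_nonneg (exp_nonneg _) (exp_nonneg _)

lemma abs_sub_le_of_abs_deriv_le_exp {h : ℝ → ℝ} {C κ : ℝ} (hC : 0 ≤ C)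
    (hh : Differentiable ℝ h) (hbound : ∀ x, |deriv h x| ≤ C * (1 + exp (κ * x))) (a b : ℝ) :
    |h b - h a| ≤ C * (1 + (exp (κ * a) + exp (κ * b))) * |b - a| := by
  have hderiv : ∀ s ∈ uIcc a b, ‖deriv h s‖ ≤ C * (1 + (exp (κ * a) + exp (κ * b))) :=
    fun s hs => (hbound s).trans <| by
      gcongr
      exact exp_mul_le_exp_mul_add_exp_mul_of_mem_uIcc hs
  exact (convex_uIcc a b).norm_image_sub_le_of_norm_deriv_le (fun s _ => hh s) hderiv
    left_mem_uIcc right_mem_uIcc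

lemma one_add_add_rpow_le {p a b : ℝ} (hp : 1 ≤ p) (ha : 0 ≤ a) (hb : 0 ≤ b) :
    (1 + (a + b)) ^ p ≤ 3 ^ (p - 1) * (1 + (a ^ p + b ^ p)) := by
  have hsum := rpow_sum_le_const_mul_sum_rpow_of_nonneg (s := Finset.univ) (f := ![1, a, b]) hp
    (by intro i _; fin_cases i <;> simp [ha, hb])
  simpa [Fin.sum_univ_three, add_assoc] using hsum

lemma integral_one_add_mul_exp_mul {μ : Measure ℝ} [IsProbabilityMeasure μ] {t : ℝ}
    (ht : Integrable (fun x => exp (t * x)) μ) (L : ℝ) :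
    ∫ x, (1 + L * exp (t * x)) ∂μ = 1 + L * mgf id μ t := by
  rw [integral_add (integrable_const 1) (ht.const_mul L), integral_const, integral_const_mul]
  simp [mgf]

lemma abs_sub_rpow_le_of_abs_deriv_le_exp {h : ℝ → ℝ} {p C κ : ℝ} (hp : 1 ≤ p) (hC : 0 ≤ C)
    (hh : Differentiable ℝ h) (hbound : ∀ x, |deriv h x| ≤ C * (1 + exp (κ * x)))
    (θ θb x : ℝ) :
    |h (θb + x) - h (θ + x)| ^ p ≤ |θb - θ| ^ p * (3 ^ (p - 1) * C ^ p *
      (1 + (exp (p * κ * θ) + exp (p * κ * θb)) * exp (p * κ * x))) := by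
  have hexp_rpow : ∀ y, exp (κ * (y + x)) ^ p = exp (p * κ * y) * exp (p * κ * x) := by
    intro y
    rw [← exp_mul, ← exp_add]
    ring_nf
  have hmvt := abs_sub_le_of_abs_deriv_le_exp hC hh hbound (θ + x) (θb + x)
  rw [add_sub_add_right_eq_sub] at hmvt
  calc |h (θb + x) - h (θ + x)| ^ p
      ≤ (C * (1 + (exp (κ * (θ + x)) + exp (κ * (θb + x)))) * |θb - θ|) ^ p :=
        rpow_le_rpow (abs_nonneg _) hmvt (by linarith)
    _ = |θb - θ| ^ p * (C ^ p * (1 + (exp (κ * (θ + x)) + exp (κ * (θb + x)))) ^ p) := by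
        rw [mul_rpow (by positivity) (abs_nonneg _), mul_rpow hC (by positivity), mul_comm]
    _ ≤ |θb - θ| ^ p * (C ^ p * (3 ^ (p - 1) *
          (1 + (exp (κ * (θ + x)) ^ p + exp (κ * (θb + x)) ^ p)))) := by
        gcongr
        exact one_add_add_rpow_le hp (exp_nonneg _) (exp_nonneg _)
    _ = _ := by
        rw [hexp_rpow, hexp_rpow]
        ring

theorem gaussian_moment_difference_exponential_growth_general (σ p κ C θ θb : ℝ)
    (hp : 1 ≤ p) (hC : 0 < C)
    (h : ℝ → ℝ) (hdiff : ContDiff ℝ 1 h)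
    (hbound : ∀ x, |deriv h x| ≤ C * (1 + Real.exp (κ * x))) :
    ∫ x, |h (θb + x) - h (θ + x)| ^ p ∂(gaussianReal 0 (σ ^ 2).toNNReal) ≤
      |θb - θ| ^ p * (3 ^ (p - 1) * C ^ p *
        (1 + (Real.exp (p * κ * θ) + Real.exp (p * κ * θb)) *
          Real.exp (p ^ 2 * κ ^ 2 * σ ^ 2 / 2))) := by
  set μ := gaussianReal 0 (σ ^ 2).toNNReal
  have hint : Integrable (fun x => exp (p * κ * x)) μ := integrable_exp_mul_gaussianReal _
  have hmgf : mgf id μ (p * κ) = exp (p ^ 2 * κ ^ 2 * σ ^ 2 / 2) := by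
    rw [mgf_id_gaussianReal, Real.coe_toNNReal _ (sq_nonneg σ)]
    ring_nf
  calc ∫ x, |h (θb + x) - h (θ + x)| ^ p ∂μ
      ≤ ∫ x, |θb - θ| ^ p * (3 ^ (p - 1) * C ^ p *
          (1 + (exp (p * κ * θ) + exp (p * κ * θb)) * exp (p * κ * x))) ∂μ :=
        integral_mono_of_nonneg (ae_of_all _ fun _ => by positivity)
          ((((integrable_const 1).add (hint.const_mul _)).const_mul _).const_mul _)
          (ae_of_all _ <| abs_sub_rpow_le_of_abs_deriv_le_exp hp hC.le
            (hdiff.differentiable one_ne_zero) hbound θ θb)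
    _ = _ := by
        rw [integral_const_mul, integral_const_mul, integral_one_add_mul_exp_mul hint, hmgf]

/-- Lipschitz-type moment bound for a `C¹` function with derivative of exponential growth,
against a centered Gaussian measure of variance `σ²`:
`∫ |h(θ̄+x) − h(θ+x)|^p dμ(x) ≤ |θ̄−θ|^p 3^{p−1} C^p (1 + (e^{pκθ} + e^{pκθ̄}) e^{p²κ²σ²/2})`. -/
theorem gaussian_moment_difference_exponential_growth (σ p κ C θ θb : ℝ)
    (hσ : 0 ≤ σ) (hp : 1 ≤ p) (hκ : 0 ≤ κ) (hC : 0 < C)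
    (h : ℝ → ℝ) (hdiff : ContDiff ℝ 1 h)
    (hbound : ∀ x, |deriv h x| ≤ C * (1 + Real.exp (κ * x))) :
    ∫ x, |h (θb + x) - h (θ + x)| ^ p ∂(gaussianReal 0 (σ ^ 2).toNNReal) ≤
      |θb - θ| ^ p * (3 ^ (p - 1) * C ^ p *
        (1 + (Real.exp (p * κ * θ) + Real.exp (p * κ * θb)) *
          Real.exp (p ^ 2 * κ ^ 2 * σ ^ 2 / 2))) :=
  gaussian_moment_difference_exponential_growth_general σ p κ C θ θb hp hC h hdiff hbound
end

section
/- Let (Ω, ℱ, μ) be a probability space, p ≥ 1, κ ≥ 1 and C > 0, and let g : ℝ → ℝ be continuously differentiable with |g(x)| ≤ C (1 + |x|^κ) and |g'(x)| ≤ C (1 + |x|^κ) for all x ∈ ℝ. Let X and (X_n)_{n ∈ ℕ} be real random variables such that sup_n E[|X_n|^{4pκ}] < ∞, E[|X|^{4pκ}] < ∞, and E[|X_n − X|^{2p}] → 0 as n → ∞. Then E[ |∫₀¹ g(λ X_n + (1−λ) X) dλ − g(X)|^p ] → 0 as n → ∞. -/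
/-!
By the mean value theorem, `|∫₀¹ g (l a + (1 - l) b) dl - g b| ≤ C (1 + |a|^κ + |b|^κ) |a - b|`.
Raising this to the power `p` and applying Cauchy–Schwarz bounds the expectation by
`‖(C (1 + |X_n|^κ + |X|^κ))^p‖₂ · (E |X_n - X|^{2p})^{1/2}`. The first factor is bounded uniformly
in `n` by the `4pκ`-th moments, and the second tends to zero.
-/

open MeasureTheory intervalIntegral Filter Topology Set

theorem rpow_le_one_add_rpow {t r s : ℝ} (ht : 0 ≤ t) (hr : 0 ≤ r) (hrs : r ≤ s) :
    t ^ r ≤ 1 + t ^ s := by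
  rcases le_total t 1 with ht1 | ht1
  · linarith [Real.rpow_le_one ht ht1 hr, Real.rpow_nonneg ht s]
  · linarith [Real.rpow_le_rpow_of_exponent_le ht1 hrs]

theorem one_add_add_rpow_le_s16 {u v r : ℝ} (hu : 0 ≤ u) (hv : 0 ≤ v) (hr : 1 ≤ r) :
    (1 + u + v) ^ r ≤ 3 ^ (r - 1) * (1 + u ^ r + v ^ r) := by
  have h := Real.rpow_sum_le_const_mul_sum_rpow_of_nonneg (s := Finset.univ) (f := ![1, u, v]) hr
    (by simp [Fin.forall_fin_succ, hu, hv])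
  simpa [Fin.sum_univ_three, add_assoc] using h

theorem sq_abs_rpow (x p : ℝ) : (|x| ^ p) ^ 2 = |x| ^ (2 * p) := by
  rw [← Real.rpow_mul_natCast (abs_nonneg x), mul_comm]
  norm_num

theorem sq_rpow_growth_weight_le {p κ C : ℝ} (hp : 1 / 2 ≤ p) (hκ : 0 ≤ κ) (hC : 0 ≤ C)
    (a b : ℝ) :
    ((C * (1 + |a| ^ κ + |b| ^ κ)) ^ p) ^ 2 ≤
      C ^ (2 * p) * 3 ^ (2 * p - 1) * (3 + |a| ^ (4 * p * κ) + |b| ^ (4 * p * κ)) := by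
  have hmoment : ∀ x : ℝ, (|x| ^ κ) ^ (2 * p) ≤ 1 + |x| ^ (4 * p * κ) := fun x => by
    rw [← Real.rpow_mul (abs_nonneg x)]
    exact rpow_le_one_add_rpow (abs_nonneg x) (by positivity) (by nlinarith)
  calc ((C * (1 + |a| ^ κ + |b| ^ κ)) ^ p) ^ 2
      = C ^ (2 * p) * (1 + |a| ^ κ + |b| ^ κ) ^ (2 * p) := by
        rw [← Real.rpow_mul_natCast (by positivity), Real.mul_rpow hC (by positivity)]
        ring_nf
    _ ≤ C ^ (2 * p) * (3 ^ (2 * p - 1) * (1 + (|a| ^ κ) ^ (2 * p) + (|b| ^ κ) ^ (2 * p))) := by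
        gcongr
        exact one_add_add_rpow_le_s16 (by positivity) (by positivity) (by linarith)
    _ ≤ C ^ (2 * p) *
          (3 ^ (2 * p - 1) * (1 + (1 + |a| ^ (4 * p * κ)) + (1 + |b| ^ (4 * p * κ)))) := by
        gcongr <;> exact hmoment _
    _ = C ^ (2 * p) * 3 ^ (2 * p - 1) * (3 + |a| ^ (4 * p * κ) + |b| ^ (4 * p * κ)) := by ring

theorem abs_le_max_abs_abs_of_mem_uIcc {a b x : ℝ} (hx : x ∈ uIcc a b) : |x| ≤ max |a| |b| :=
  abs_le.2 (uIcc_subset_Icc (abs_le.1 (le_max_left |a| |b|)) (abs_le.1 (le_max_right |a| |b|)) hx)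

theorem abs_rpow_le_add_of_mem_uIcc {a b x κ : ℝ} (hκ : 0 ≤ κ) (hx : x ∈ uIcc a b) :
    |x| ^ κ ≤ |a| ^ κ + |b| ^ κ :=
  calc |x| ^ κ ≤ max |a| |b| ^ κ :=
        Real.rpow_le_rpow (abs_nonneg x) (abs_le_max_abs_abs_of_mem_uIcc hx) hκ
    _ = max (|a| ^ κ) (|b| ^ κ) := Real.rpow_max (abs_nonneg a) (abs_nonneg b) hκ
    _ ≤ |a| ^ κ + |b| ^ κ := max_le_add_of_nonneg (by positivity) (by positivity)

theorem abs_integral_segment_sub_le {g : ℝ → ℝ} (hg : Differentiable ℝ g) {a b K : ℝ}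
    (hK : ∀ x ∈ uIcc a b, |deriv g x| ≤ K) :
    |(∫ l in (0:ℝ)..1, g (l * a + (1 - l) * b)) - g b| ≤ K * |a - b| := by
  have hint : IntervalIntegrable (fun l : ℝ => g (l * a + (1 - l) * b)) volume 0 1 :=
    (hg.continuous.comp (by fun_prop)).intervalIntegrable 0 1
  have hsub : (∫ l in (0:ℝ)..1, g (l * a + (1 - l) * b)) - g b =
      ∫ l in (0:ℝ)..1, (g (l * a + (1 - l) * b) - g b) := by
    simp [intervalIntegral.integral_sub hint intervalIntegrable_const]
  have hpt : ∀ l ∈ uIoc (0:ℝ) 1, ‖g (l * a + (1 - l) * b) - g b‖ ≤ K * |a - b| := by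
    rw [uIoc_of_le zero_le_one]
    rintro l ⟨hl0, hl1⟩
    have hmem : l * a + (1 - l) * b ∈ uIcc a b :=
      convex_uIcc a b left_mem_uIcc right_mem_uIcc hl0.le (by linarith) (by ring)
    have hK0 : 0 ≤ K := (abs_nonneg _).trans (hK b right_mem_uIcc)
    calc ‖g (l * a + (1 - l) * b) - g b‖ ≤ K * ‖l * a + (1 - l) * b - b‖ :=
          (convex_uIcc a b).norm_image_sub_le_of_norm_deriv_le (fun x _ => hg x) hK
            right_mem_uIcc hmem
      _ = K * (l * |a - b|) := by
        rw [show l * a + (1 - l) * b - b = l * (a - b) by ring, Real.norm_eq_abs, abs_mul,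
          abs_of_pos hl0]
      _ ≤ K * |a - b| := by gcongr; exact mul_le_of_le_one_left (abs_nonneg _) hl1
  simpa [hsub] using intervalIntegral.norm_integral_le_of_norm_le_const hpt

theorem abs_integral_segment_sub_rpow_le {g : ℝ → ℝ} (hg : Differentiable ℝ g) {p κ C : ℝ}
    (hp : 0 ≤ p) (hκ : 0 ≤ κ) (hC : 0 ≤ C) (hg' : ∀ x, |deriv g x| ≤ C * (1 + |x| ^ κ))
    (a b : ℝ) :
    |(∫ l in (0:ℝ)..1, g (l * a + (1 - l) * b)) - g b| ^ p ≤
      (C * (1 + |a| ^ κ + |b| ^ κ)) ^ p * |a - b| ^ p := by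
  have hK : ∀ x ∈ uIcc a b, |deriv g x| ≤ C * (1 + |a| ^ κ + |b| ^ κ) := fun x hx =>
    (hg' x).trans (by rw [add_assoc]; gcongr; exact abs_rpow_le_add_of_mem_uIcc hκ hx)
  rw [← Real.mul_rpow (by positivity) (abs_nonneg _)]
  exact Real.rpow_le_rpow (abs_nonneg _) (abs_integral_segment_sub_le hg hK) hp

section Integrals

variable {Ω : Type*} [MeasurableSpace Ω] {μ : Measure Ω}

theorem integral_mul_le_sqrt_mul_sqrt {f g : Ω → ℝ} (hf0 : 0 ≤ᵐ[μ] f) (hg0 : 0 ≤ᵐ[μ] g)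
    (hf : MemLp f 2 μ) (hg : MemLp g 2 μ) :
    ∫ ω, f ω * g ω ∂μ ≤ √(∫ ω, f ω ^ 2 ∂μ) * √(∫ ω, g ω ^ 2 ∂μ) := by
  have h := integral_mul_le_Lp_mul_Lq_of_nonneg Real.HolderConjugate.two_two hf0 hg0
    (by simpa using hf) (by simpa using hg)
  simpa only [Real.rpow_two, Real.sqrt_eq_rpow] using h

theorem tendsto_integral_of_le_mul_of_sq {ι : Type*} {l : Filter ι} {F A B : ι → Ω → ℝ}
    (hF0 : ∀ i, 0 ≤ᵐ[μ] F i) (hFAB : ∀ i, F i ≤ᵐ[μ] A i * B i)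
    (hA0 : ∀ i, 0 ≤ᵐ[μ] A i) (hB0 : ∀ i, 0 ≤ᵐ[μ] B i)
    (hA : ∀ i, MemLp (A i) 2 μ) (hB : ∀ i, MemLp (B i) 2 μ)
    {M : ℝ} (hAM : ∀ i, ∫ ω, A i ω ^ 2 ∂μ ≤ M)
    (hBl : Tendsto (fun i => ∫ ω, B i ω ^ 2 ∂μ) l (𝓝 0)) :
    Tendsto (fun i => ∫ ω, F i ω ∂μ) l (𝓝 0) := by
  have hbound : ∀ i, ∫ ω, F i ω ∂μ ≤ √M * √(∫ ω, B i ω ^ 2 ∂μ) := fun i =>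
    calc ∫ ω, F i ω ∂μ ≤ ∫ ω, A i ω * B i ω ∂μ :=
          integral_mono_of_nonneg (hF0 i) ((hA i).integrable_mul (hB i)) (hFAB i)
      _ ≤ √(∫ ω, A i ω ^ 2 ∂μ) * √(∫ ω, B i ω ^ 2 ∂μ) :=
          integral_mul_le_sqrt_mul_sqrt (hA0 i) (hB0 i) (hA i) (hB i)
      _ ≤ √M * √(∫ ω, B i ω ^ 2 ∂μ) := by gcongr; exact hAM i
  have hlim : Tendsto (fun i => √M * √(∫ ω, B i ω ^ 2 ∂μ)) l (𝓝 0) := by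
    simpa using hBl.sqrt.const_mul √M
  exact squeeze_zero (fun i => integral_nonneg_of_ae (hF0 i)) hbound hlim

theorem memLp_two_of_sq_le {f G : Ω → ℝ} (hf : AEStronglyMeasurable f μ) (hG : Integrable G μ)
    (hfG : ∀ ω, f ω ^ 2 ≤ G ω) : MemLp f 2 μ :=
  (memLp_two_iff_integrable_sq hf).2 <| hG.mono' (hf.pow 2) <| ae_of_all _ fun ω => by
    simpa [abs_of_nonneg (sq_nonneg (f ω))] using hfG ω

theorem memLp_two_abs_rpow {p : ℝ} {f : Ω → ℝ} (hf : Measurable f)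
    (h : Integrable (fun ω => |f ω| ^ (2 * p)) μ) : MemLp (fun ω => |f ω| ^ p) 2 μ :=
  (memLp_two_iff_integrable_sq (hf.abs.pow_const p).aestronglyMeasurable).2 <| by
    simpa only [sq_abs_rpow] using h

variable {p κ C : ℝ} {Y Z : Ω → ℝ}

theorem memLp_two_growth_weight (hp : 1 / 2 ≤ p) (hκ : 0 ≤ κ) (hC : 0 ≤ C) (hY : Measurable Y)
    (hZ : Measurable Z) (hYi : Integrable (fun ω => |Y ω| ^ (4 * p * κ)) μ)
    (hZi : Integrable (fun ω => |Z ω| ^ (4 * p * κ)) μ) [IsFiniteMeasure μ] :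
    MemLp (fun ω => (C * (1 + |Y ω| ^ κ + |Z ω| ^ κ)) ^ p) 2 μ := by
  have hG : Integrable (fun ω => C ^ (2 * p) * 3 ^ (2 * p - 1) *
      (3 + |Y ω| ^ (4 * p * κ) + |Z ω| ^ (4 * p * κ))) μ :=
    (((integrable_const 3).add hYi).add hZi).const_mul _
  exact memLp_two_of_sq_le (by fun_prop (disch := positivity)) hG fun ω => sq_rpow_growth_weight_le hp hκ hC (Y ω) (Z ω)

theorem integral_sq_growth_weight_le [IsProbabilityMeasure μ] (hp : 1 / 2 ≤ p) (hκ : 0 ≤ κ)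
    (hC : 0 ≤ C) (hYi : Integrable (fun ω => |Y ω| ^ (4 * p * κ)) μ)
    (hZi : Integrable (fun ω => |Z ω| ^ (4 * p * κ)) μ) :
    ∫ ω, ((C * (1 + |Y ω| ^ κ + |Z ω| ^ κ)) ^ p) ^ 2 ∂μ ≤
      C ^ (2 * p) * 3 ^ (2 * p - 1) *
        (3 + ∫ ω, |Y ω| ^ (4 * p * κ) ∂μ + ∫ ω, |Z ω| ^ (4 * p * κ) ∂μ) := by
  have h3Y : Integrable (fun ω => 3 + |Y ω| ^ (4 * p * κ)) μ := (integrable_const 3).add hYi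
  calc ∫ ω, ((C * (1 + |Y ω| ^ κ + |Z ω| ^ κ)) ^ p) ^ 2 ∂μ
      ≤ ∫ ω, C ^ (2 * p) * 3 ^ (2 * p - 1) *
          (3 + |Y ω| ^ (4 * p * κ) + |Z ω| ^ (4 * p * κ)) ∂μ :=
        integral_mono_of_nonneg (ae_of_all _ fun ω => by positivity)
          ((h3Y.add hZi).const_mul _)
          (ae_of_all _ fun ω => sq_rpow_growth_weight_le hp hκ hC (Y ω) (Z ω))
    _ = _ := by
        rw [MeasureTheory.integral_const_mul, integral_add h3Y hZi,
          integral_add (integrable_const 3) hYi, MeasureTheory.integral_const]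
        simp only [probReal_univ, one_smul]

end Integrals

theorem averaged_derivative_tendsto_general {Ω : Type*} [MeasurableSpace Ω]
    (μ : Measure Ω) [IsProbabilityMeasure μ]
    (p κ C : ℝ) (hp : 1 ≤ p) (hκ : 1 ≤ κ) (hC : 0 < C)
    (g : ℝ → ℝ) (hg : ContDiff ℝ 1 g)
    (hg'b : ∀ x, |deriv g x| ≤ C * (1 + |x| ^ κ))
    (X : ℕ → Ω → ℝ) (X₀ : Ω → ℝ) (hXn : ∀ n, Measurable (X n)) (hX : Measurable X₀)
    (hintn : ∀ n, Integrable (fun ω => |X n ω| ^ (4 * p * κ)) μ)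
    (hint0 : Integrable (fun ω => |X₀ ω| ^ (4 * p * κ)) μ)
    (hbdd : ∃ M : ℝ, ∀ n, ∫ ω, |X n ω| ^ (4 * p * κ) ∂μ ≤ M)
    (hconvint : ∀ n, Integrable (fun ω => |X n ω - X₀ ω| ^ (2 * p)) μ)
    (hconv : Filter.Tendsto (fun n => ∫ ω, |X n ω - X₀ ω| ^ (2 * p) ∂μ)
      Filter.atTop (nhds 0)) :
    Filter.Tendsto
      (fun n => ∫ ω,
        |(∫ l in (0:ℝ)..1, g (l * X n ω + (1 - l) * X₀ ω)) - g (X₀ ω)| ^ p ∂μ)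
      Filter.atTop (nhds 0) := by
  obtain ⟨M, hM⟩ := hbdd
  have hp2 : 1 / 2 ≤ p := by linarith
  have hκ0 : 0 ≤ κ := by linarith
  refine tendsto_integral_of_le_mul_of_sq
    (A := fun n ω => (C * (1 + |X n ω| ^ κ + |X₀ ω| ^ κ)) ^ p)
    (B := fun n ω => |X n ω - X₀ ω| ^ p)
    (M := C ^ (2 * p) * 3 ^ (2 * p - 1) * (3 + M + ∫ ω, |X₀ ω| ^ (4 * p * κ) ∂μ))
    (fun n => ae_of_all _ fun ω => by positivity)
    (fun n => ae_of_all _ fun ω => abs_integral_segment_sub_rpow_le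
      (hg.differentiable one_ne_zero) (by linarith) hκ0 hC.le hg'b _ _)
    (fun n => ae_of_all _ fun ω => by positivity) (fun n => ae_of_all _ fun ω => by positivity)
    (fun n => memLp_two_growth_weight hp2 hκ0 hC.le (hXn n) hX (hintn n) hint0)
    (fun n => memLp_two_abs_rpow ((hXn n).sub hX) (hconvint n))
    (fun n => ?_) (by simpa only [sq_abs_rpow] using hconv)
  refine (integral_sq_growth_weight_le hp2 hκ0 hC.le (hintn n) hint0).trans ?_
  gcongr
  exact hM n

/-- Convergence of the averaged discretized derivative: if `g ∈ C¹` with `g` and `g'` of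
polynomial growth of order `κ`, `sup_n E[|X_n|^{4pκ}] < ∞`, `E[|X|^{4pκ}] < ∞` and
`E[|X_n − X|^{2p}] → 0`, then `E[|∫₀¹ g(λ X_n + (1−λ) X) dλ − g(X)|^p] → 0`. -/
theorem averaged_derivative_tendsto {Ω : Type*} [MeasurableSpace Ω]
    (μ : Measure Ω) [IsProbabilityMeasure μ]
    (p κ C : ℝ) (hp : 1 ≤ p) (hκ : 1 ≤ κ) (hC : 0 < C)
    (g : ℝ → ℝ) (hg : ContDiff ℝ 1 g)
    (hgb : ∀ x, |g x| ≤ C * (1 + |x| ^ κ))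
    (hg'b : ∀ x, |deriv g x| ≤ C * (1 + |x| ^ κ))
    (X : ℕ → Ω → ℝ) (X₀ : Ω → ℝ) (hXn : ∀ n, Measurable (X n)) (hX : Measurable X₀)
    (hintn : ∀ n, Integrable (fun ω => |X n ω| ^ (4 * p * κ)) μ)
    (hint0 : Integrable (fun ω => |X₀ ω| ^ (4 * p * κ)) μ)
    (hbdd : ∃ M : ℝ, ∀ n, ∫ ω, |X n ω| ^ (4 * p * κ) ∂μ ≤ M)
    (hconvint : ∀ n, Integrable (fun ω => |X n ω - X₀ ω| ^ (2 * p)) μ)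
    (hconv : Filter.Tendsto (fun n => ∫ ω, |X n ω - X₀ ω| ^ (2 * p) ∂μ)
      Filter.atTop (nhds 0)) :
    Filter.Tendsto
      (fun n => ∫ ω,
        |(∫ l in (0:ℝ)..1, g (l * X n ω + (1 - l) * X₀ ω)) - g (X₀ ω)| ^ p ∂μ)
      Filter.atTop (nhds 0) :=
  averaged_derivative_tendsto_general μ p κ C hp hκ hC g hg hg'b X X₀ hXn hX hintn hint0 hbdd
    hconvint hconv
end
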